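/- arXiv:2509.08425 — 3 statements merged into one kernel-verified Lean document; each statement's English description precedes it below -/
import Mathlib

section
/- Let p ≥ 1 be real and let P_n(X_n, c_X) be the set of all types P_X ∈ P_n(X_n) satisfying E_{P_X}[|X|^p] ≤ c_X. Then |P_n(X_n, c_X)| ≤ ((n+1)c)^{c̃ · n^{(1 + pα)/(1+p)}}, where c = (2 c_X^{1/p} + 1)^{1/(1 + 1/p + α)} and c̃ = (1 + 1/p + α)(4 c_X^{1/p} + 1)^{p/(1+p)}. In particular, the number of such types is sub-exponential in n for every α ∈ (0,1). -/
/-!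
Every mass of a type is a multiple of `1/n`, so each support point `x` contributes at least
`|x|^p / n` to the moment: the support lies in `|x| ≤ (n c_X)^{1/p}`, i.e. within
`I ≈ c_X^{1/p} n^{1/p+α}` lattice steps of `0`, and at most `K ≈ n c_X / T^p` support points
lie beyond any threshold `T`. A type is determined by its numerators at the nonzero lattice
points (the mass at `0` is fixed by normalisation). The `2L ≈ 2 T n^α` points inside the
threshold carry one of `n + 1` numerators each, and the at most `K` points beyond it can be
added one at a time, each with one of `2I` positions and `n` nonzero numerators; this leaves at
most `(n+1)^{2L} (2In+1)^K` types. Choosing `T^{1+p} = s c_X n^{1-α} / 2` with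
`s = 1 + 1/p + α` makes both exponents `2L` and `sK` of order `n^{(1+pα)/(1+p)}`.
-/

open Set

noncomputable section

/-- A type with denominator `n` on the lattice alphabet `{iΔ : i ∈ ℤ}`. -/
def IsType (n : ℕ) (Δ : ℝ) (P : ℝ → ℝ) : Prop :=
  (∀ x, 0 ≤ P x) ∧ (∀ x, P x ≠ 0 → ∃ i : ℤ, x = (i : ℝ) * Δ) ∧
    (∀ x, ∃ k : ℕ, P x = (k : ℝ) / n) ∧ (Function.support P).Finite ∧ ∑ᶠ x, P x = 1

/-- `P_n(X_n, c_X)`: the set of all types with denominator `n` on the lattice alphabet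
satisfying the generalized power constraint `E_{P_X}[|X|^p] ≤ c_X`. -/
def constrainedTypes (n : ℕ) (Δ p cX : ℝ) : Set (ℝ → ℝ) :=
  {P | IsType n Δ P ∧ (∑ᶠ x, P x * |x| ^ p) ≤ cX}

open scoped Finset

section SparseFunctions

variable {ι : Type*} [Fintype ι] [DecidableEq ι]

def sparseOutside (s : Finset ι) (n K : ℕ) : Finset (ι → ℕ) :=
  {f ∈ Fintype.piFinset fun _ => Finset.range (n + 1) | #{i | i ∉ s ∧ f i ≠ 0} ≤ K}

lemma sparseOutside_zero_subset (s : Finset ι) (n : ℕ) :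
    sparseOutside s n 0 ⊆
      Fintype.piFinset fun i => if i ∈ s then Finset.range (n + 1) else {0} := by
  intro f hf
  simp only [sparseOutside, Finset.mem_filter, Fintype.mem_piFinset, nonpos_iff_eq_zero,
    Finset.card_eq_zero, Finset.filter_eq_empty_iff, Finset.mem_univ, true_implies, not_and,
    not_not] at hf ⊢
  intro i
  split_ifs with hi
  · exact hf.1 i
  · simp [hf.2 hi]

lemma sparseOutside_succ_subset (s : Finset ι) (n K : ℕ) :
    sparseOutside s n (K + 1) ⊆ sparseOutside s n K ∪
      (sparseOutside s n K ×ˢ (Finset.univ ×ˢ Finset.Icc 1 n)).image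
        fun q => Function.update q.1 q.2.1 q.2.2 := by
  intro f hf
  simp only [sparseOutside, Finset.mem_filter, Fintype.mem_piFinset, Finset.mem_range] at hf
  obtain ⟨hbound, htail⟩ := hf
  by_cases hK : #{i | i ∉ s ∧ f i ≠ 0} ≤ K
  · exact Finset.mem_union_left _ (by simp [sparseOutside, hbound, hK])
  obtain ⟨i, hi⟩ : ({i | i ∉ s ∧ f i ≠ 0} : Finset ι).Nonempty :=
    Finset.card_pos.mp (by omega)
  have htail_update : ({j | j ∉ s ∧ Function.update f i 0 j ≠ 0} : Finset ι) =
      ({j | j ∉ s ∧ f j ≠ 0} : Finset ι).erase i := by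
    ext j
    by_cases hj : j = i <;> simp [hj, Function.update_apply]
  refine Finset.mem_union_right _
    (Finset.mem_image.mpr ⟨(Function.update f i 0, i, f i), ?_, ?_⟩)
  · have hfi := (Finset.mem_filter.mp hi).2.2
    simp only [sparseOutside, Finset.mem_product, Finset.mem_filter, Fintype.mem_piFinset,
      Finset.mem_range, Finset.mem_univ, Finset.mem_Icc, htail_update, Finset.card_erase_of_mem hi]
    refine ⟨⟨fun j => ?_, by omega⟩, trivial, by omega, by have := hbound i; omega⟩
    rcases eq_or_ne j i with rfl | hj
    · simp
    · simpa [hj] using hbound j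
  · simp

lemma card_sparseOutside_le (s : Finset ι) (n K : ℕ) :
    #(sparseOutside s n K) ≤ (n + 1) ^ #s * (Fintype.card ι * n + 1) ^ K := by
  induction K with
  | zero =>
    calc #(sparseOutside s n 0)
        ≤ #(Fintype.piFinset fun i => if i ∈ s then Finset.range (n + 1) else {0}) :=
          Finset.card_le_card (sparseOutside_zero_subset s n)
      _ = (n + 1) ^ #s * (Fintype.card ι * n + 1) ^ 0 := by
          simp [apply_ite Finset.card, Finset.prod_ite_mem]
  | succ K ih =>
    calc #(sparseOutside s n (K + 1))
        ≤ #(sparseOutside s n K) + #(sparseOutside s n K) * (Fintype.card ι * n) := by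
          refine (Finset.card_le_card (sparseOutside_succ_subset s n K)).trans
            ((Finset.card_union_le _ _).trans
              (Nat.add_le_add_left (Finset.card_image_le.trans ?_) _))
          simp
      _ = #(sparseOutside s n K) * (Fintype.card ι * n + 1) := by ring
      _ ≤ _ := by rw [pow_succ, ← mul_assoc]; gcongr

end SparseFunctions

lemma Finset.sum_le_finsum {α M : Type*} [AddCommMonoid M] [PartialOrder M]
    [IsOrderedAddMonoid M] {f : α → M} (hf : (Function.support f).Finite)
    (h0 : ∀ x, 0 ≤ f x) (s : Finset α) : ∑ x ∈ s, f x ≤ ∑ᶠ x, f x := by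
  classical
  calc ∑ x ∈ s, f x ≤ ∑ x ∈ s ∪ hf.toFinset, f x :=
        Finset.sum_le_sum_of_subset_of_nonneg Finset.subset_union_left fun x _ _ => h0 x
    _ = ∑ᶠ x, f x :=
        (finsum_eq_sum_of_support_toFinset_subset _ hf Finset.subset_union_right).symm

lemma eq_of_finsum_eq_of_forall_ne {α M : Type*} [AddCommGroup M] {f g : α → M}
    (hf : (Function.support f).Finite) (hg : (Function.support g).Finite)
    (hsum : ∑ᶠ x, f x = ∑ᶠ x, g x) (a : α) (h : ∀ x ≠ a, f x = g x) : f = g := by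
  funext x
  rcases eq_or_ne x a with rfl | hx
  · have := finsum_eq_single (fun y => f y - g y) x fun y hy => sub_eq_zero.2 (h y hy)
    rw [finsum_sub_distrib hf hg, hsum, sub_self] at this
    exact sub_eq_zero.1 this.symm
  · exact h x hx

namespace IsType

variable {n : ℕ} {Δ : ℝ} {P Q : ℝ → ℝ}

lemma le_one (hP : IsType n Δ P) (x : ℝ) : P x ≤ 1 :=
  hP.2.2.2.2 ▸ single_le_finsum x hP.2.2.2.1 hP.1

lemma natFloor_mul_le (hP : IsType n Δ P) (x : ℝ) : ⌊n * P x⌋₊ ≤ n :=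
  Nat.floor_le_of_le (mul_le_of_le_one_right n.cast_nonneg (hP.le_one x))

lemma natFloor_mul_div (hn : 0 < n) (hP : IsType n Δ P) (x : ℝ) :
    (⌊n * P x⌋₊ : ℝ) / n = P x := by
  obtain ⟨k, hk⟩ := hP.2.2.1 x
  rw [hk, mul_div_cancel₀ _ (by positivity), Nat.floor_natCast]

lemma inv_le_of_ne_zero (hP : IsType n Δ P) {x : ℝ} (hx : P x ≠ 0) : (n : ℝ)⁻¹ ≤ P x := by
  obtain ⟨k, hk⟩ := hP.2.2.1 x
  have hk0 : k ≠ 0 := by rintro rfl; simp [hk] at hx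
  rw [hk, ← one_div]
  gcongr
  exact_mod_cast Nat.one_le_iff_ne_zero.mpr hk0

lemma ext_of_lattice (hP : IsType n Δ P) (hQ : IsType n Δ Q)
    (h : ∀ i : ℤ, i ≠ 0 → P (i * Δ) = Q (i * Δ)) : P = Q := by
  refine eq_of_finsum_eq_of_forall_ne hP.2.2.2.1 hQ.2.2.2.1
    (hP.2.2.2.2.trans hQ.2.2.2.2.symm) 0 fun x hx => ?_
  by_cases hPx : P x = 0
  · by_cases hQx : Q x = 0
    · rw [hPx, hQx]
    obtain ⟨i, rfl⟩ := hQ.2.1 x hQx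
    exact h i (by rintro rfl; simp at hx)
  · obtain ⟨i, rfl⟩ := hP.2.1 x hPx
    exact h i (by rintro rfl; simp at hx)

end IsType

section ConstrainedTypes

variable {n : ℕ} {Δ p cX : ℝ} {P : ℝ → ℝ}

lemma sum_mul_abs_rpow_le_of_mem_constrainedTypes (hP : P ∈ constrainedTypes n Δ p cX)
    (s : Finset ℝ) : ∑ x ∈ s, P x * |x| ^ p ≤ cX :=
  (Finset.sum_le_finsum (hP.1.2.2.2.1.subset (Function.support_mul_subset_left _ _))
    (fun x => mul_nonneg (hP.1.1 x) (by positivity)) s).trans hP.2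

lemma abs_rpow_le_of_mem_constrainedTypes (hn : 0 < n) (hP : P ∈ constrainedTypes n Δ p cX)
    {x : ℝ} (hx : P x ≠ 0) : |x| ^ p ≤ n * cX := by
  have hle : P x * |x| ^ p ≤ cX := by
    simpa using sum_mul_abs_rpow_le_of_mem_constrainedTypes hP {x}
  exact (inv_mul_le_iff₀ (by positivity)).1
    ((mul_le_mul_of_nonneg_right (hP.1.inv_le_of_ne_zero hx) (by positivity)).trans hle)

lemma abs_le_of_mem_constrainedTypes (hn : 0 < n) (hp : 0 < p)
    (hP : P ∈ constrainedTypes n Δ p cX) {x : ℝ} (hx : P x ≠ 0) : |x| ≤ (n * cX) ^ p⁻¹ := by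
  have hle := abs_rpow_le_of_mem_constrainedTypes hn hP hx
  exact (Real.le_rpow_inv_iff_of_pos (abs_nonneg x) ((by positivity : 0 ≤ |x| ^ p).trans hle)
    hp).2 hle

lemma card_mul_rpow_le_of_mem_constrainedTypes (hn : 0 < n) (hp : 0 ≤ p) {T : ℝ} (hT : 0 ≤ T)
    (hP : P ∈ constrainedTypes n Δ p cX) (s : Finset ℝ) (hs : ∀ x ∈ s, P x ≠ 0 ∧ T ≤ |x|) :
    #s * T ^ p ≤ n * cX := by
  have : #s * ((n : ℝ)⁻¹ * T ^ p) ≤ cX := by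
    rw [← nsmul_eq_mul]
    refine (Finset.card_nsmul_le_sum s _ _ fun x hx => ?_).trans
      (sum_mul_abs_rpow_le_of_mem_constrainedTypes hP s)
    exact mul_le_mul (hP.1.inv_le_of_ne_zero (hs x hx).1)
      (Real.rpow_le_rpow hT (hs x hx).2 hp) (by positivity) (hP.1.1 x)
  calc #s * T ^ p = n * (#s * ((n : ℝ)⁻¹ * T ^ p)) := by field_simp
    _ ≤ n * cX := by gcongr

end ConstrainedTypes

section LatticeEncoding

def latticeIndices (I : ℕ) : Finset ℤ := (Finset.Icc (-(I : ℤ)) I).erase 0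

def smallIndices (I L : ℕ) : Finset (latticeIndices I) := {i | (i : ℤ).natAbs ≤ L}

def latticeNumerators (n : ℕ) (Δ : ℝ) (I : ℕ) (P : ℝ → ℝ) : latticeIndices I → ℕ :=
  fun i => ⌊n * P ((i : ℤ) * Δ)⌋₊

lemma card_latticeIndices (I : ℕ) : #(latticeIndices I) = 2 * I := by
  rw [latticeIndices, Finset.card_erase_of_mem (by simp), Int.card_Icc]
  omega

lemma card_smallIndices_le (I L : ℕ) : #(smallIndices I L) ≤ 2 * L := by
  calc #(smallIndices I L) ≤ #(latticeIndices L) :=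
        Finset.card_le_card_of_injOn Subtype.val
          (fun i hi => by
            have := (Finset.mem_filter.mp hi).2
            have := Finset.mem_erase.mp i.2
            simp [latticeIndices]
            omega)
          Subtype.val_injective.injOn
    _ = 2 * L := card_latticeIndices L

variable {n I L K : ℕ} {Δ p cX T : ℝ}

lemma latticeNumerators_mem_sparseOutside (hn : 0 < n) (hΔ : 0 < Δ) (hp : 0 ≤ p) (hT : 0 < T)
    (hL : T < (L + 1) * Δ) (hK : n * cX < (K + 1) * T ^ p) {P : ℝ → ℝ}
    (hP : P ∈ constrainedTypes n Δ p cX) :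
    latticeNumerators n Δ I P ∈ sparseOutside (smallIndices I L) n K := by
  set tail : Finset (latticeIndices I) :=
    {i | i ∉ smallIndices I L ∧ latticeNumerators n Δ I P i ≠ 0}
  have htail : ∀ i ∈ tail, P ((i : ℤ) * Δ) ≠ 0 ∧ T ≤ |((i : ℤ) : ℝ) * Δ| := by
    intro i hi
    simp only [tail, smallIndices, latticeNumerators, Finset.mem_filter, Finset.mem_univ,
      true_and, not_le] at hi
    refine ⟨fun h => hi.2 (by simp [h]), ?_⟩
    have hLi : (L : ℝ) + 1 ≤ |((i : ℤ) : ℝ)| := by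
      rw [← Int.cast_abs, ← Nat.cast_natAbs]; exact_mod_cast hi.1
    rw [abs_mul, abs_of_pos hΔ]
    nlinarith
  have hcard : (#tail : ℝ) * T ^ p ≤ n * cX := by
    have hinj : Function.Injective fun i : latticeIndices I => ((i : ℤ) : ℝ) * Δ :=
      fun i j h => Subtype.ext (by exact_mod_cast mul_right_cancel₀ hΔ.ne' h)
    have := card_mul_rpow_le_of_mem_constrainedTypes hn hp hT.le hP
      (tail.image fun i : latticeIndices I => ((i : ℤ) : ℝ) * Δ)
      (by simpa only [Finset.mem_image, forall_exists_index, and_imp, forall_apply_eq_imp_iff₂]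
        using htail)
    rwa [Finset.card_image_of_injective _ hinj] at this
  simp only [sparseOutside, Finset.mem_filter, Fintype.mem_piFinset, Finset.mem_range]
  refine ⟨fun i => Nat.lt_succ_of_le (hP.1.natFloor_mul_le _), ?_⟩
  have : (#tail : ℝ) < K + 1 := lt_of_mul_lt_mul_right (hcard.trans_lt hK) (by positivity)
  exact_mod_cast Nat.lt_succ_iff.mp (by exact_mod_cast this)

lemma injOn_latticeNumerators (hn : 0 < n) (hΔ : 0 < Δ) (hp : 0 < p)
    (hI : (n * cX) ^ p⁻¹ < (I + 1) * Δ) :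
    InjOn (latticeNumerators n Δ I) (constrainedTypes n Δ p cX) := by
  intro P hP Q hQ h
  refine hP.1.ext_of_lattice hQ.1 fun i hi => ?_
  by_cases hiI : i.natAbs ≤ I
  · have hmem : i ∈ latticeIndices I := by simp [latticeIndices, hi]; omega
    have := congrArg (fun f => (f ⟨i, hmem⟩ : ℝ) / n) h
    simpa only [latticeNumerators, hP.1.natFloor_mul_div hn, hQ.1.natFloor_mul_div hn] using this
  · have hvanish : ∀ R : ℝ → ℝ, R ∈ constrainedTypes n Δ p cX → R (i * Δ) = 0 := by
      intro R hR
      by_contra hRi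
      have := abs_le_of_mem_constrainedTypes hn hp hR hRi
      have hIi : (I : ℝ) + 1 ≤ |(i : ℝ)| := by
        rw [← Int.cast_abs, ← Nat.cast_natAbs]; exact_mod_cast (by omega : I + 1 ≤ i.natAbs)
      rw [abs_mul, abs_of_pos hΔ] at this
      nlinarith
    rw [hvanish P hP, hvanish Q hQ]

theorem constrainedTypes_finite_and_ncard_le (hn : 0 < n) (hΔ : 0 < Δ) (hp : 0 < p)
    (hT : 0 < T) :
    (constrainedTypes n Δ p cX).Finite ∧ (constrainedTypes n Δ p cX).ncard ≤
      (n + 1) ^ (2 * ⌊T / Δ⌋₊) * (2 * ⌊(n * cX) ^ p⁻¹ / Δ⌋₊ * n + 1) ^ ⌊n * cX / T ^ p⌋₊ := by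
  set I := ⌊(n * cX) ^ p⁻¹ / Δ⌋₊
  set L := ⌊T / Δ⌋₊
  set K := ⌊n * cX / T ^ p⌋₊
  have hmaps : MapsTo (latticeNumerators n Δ I) (constrainedTypes n Δ p cX)
      (sparseOutside (smallIndices I L) n K) := fun P hP =>
    latticeNumerators_mem_sparseOutside hn hΔ hp.le hT
      ((div_lt_iff₀ hΔ).1 (Nat.lt_floor_add_one _))
      ((div_lt_iff₀ (by positivity)).1 (Nat.lt_floor_add_one _)) hP
  have hinj := injOn_latticeNumerators (cX := cX) (I := I) hn hΔ hp
    ((div_lt_iff₀ hΔ).1 (Nat.lt_floor_add_one _))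
  refine ⟨Finite.of_injOn hmaps hinj (Finset.finite_toSet _), ?_⟩
  calc (constrainedTypes n Δ p cX).ncard ≤ #(sparseOutside (smallIndices I L) n K) := by
        rw [← ncard_coe_finset]
        exact ncard_le_ncard_of_injOn _ hmaps hinj (Finset.finite_toSet _)
    _ ≤ (n + 1) ^ #(smallIndices I L) * (Fintype.card (latticeIndices I) * n + 1) ^ K :=
        card_sparseOutside_le _ n K
    _ ≤ (n + 1) ^ (2 * L) * (2 * I * n + 1) ^ K := by
        rw [Fintype.card_coe, card_latticeIndices]
        gcongr
        · omega
        · exact card_smallIndices_le I L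

end LatticeEncoding

section RealBounds

open Real

lemma two_mul_le_rpow_one_add {p s : ℝ} (hp : 1 ≤ p) (hs : 1 + 1 / p ≤ s) :
    2 * s ≤ s ^ (1 + p) := by
  have hp0 : 0 < p := by linarith
  have hbernoulli : 2 ≤ (1 + 1 / p) ^ p := by
    have := one_add_mul_self_le_rpow_one_add (s := 1 / p)
      (by have := one_div_pos.2 hp0; linarith) hp
    rw [mul_one_div_cancel hp0.ne'] at this
    linarith
  have hs0 : 0 < s := by have := one_div_pos.2 hp0; linarith
  rw [rpow_add hs0, rpow_one, mul_comm]
  gcongr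
  exact hbernoulli.trans (rpow_le_rpow (by positivity) hs hp0.le)

lemma four_mul_rpow_le {p s : ℝ} (hp : 1 ≤ p) (hs : 1 + 1 / p ≤ s) :
    4 * (s / 2) ^ (1 / (1 + p)) ≤ s * 4 ^ (p / (1 + p)) := by
  have hp0 : 0 < p := by linarith
  have hp1 : 0 < 1 + p := by linarith
  have hs0 : 0 < s := by have := one_div_pos.2 hp0; linarith
  have hsplit : (4 : ℝ) = 4 ^ (p / (1 + p)) * 4 ^ (1 / (1 + p)) := by
    rw [← rpow_add (by norm_num), ← add_div, add_comm p 1, div_self hp1.ne', rpow_one]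
  have hroot : (2 * s) ^ (1 / (1 + p)) ≤ s := by
    calc (2 * s) ^ (1 / (1 + p)) ≤ (s ^ (1 + p)) ^ (1 / (1 + p)) :=
          rpow_le_rpow (by positivity) (two_mul_le_rpow_one_add hp hs) (by positivity)
      _ = s := by rw [← rpow_mul hs0.le, mul_one_div_cancel hp1.ne', rpow_one]
  calc 4 * (s / 2) ^ (1 / (1 + p))
      = 4 ^ (p / (1 + p)) * (4 * (s / 2)) ^ (1 / (1 + p)) := by
        rw [mul_rpow (by norm_num) (by positivity), ← mul_assoc, ← hsplit]
    _ = 4 ^ (p / (1 + p)) * (2 * s) ^ (1 / (1 + p)) := by ring_nf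
    _ ≤ s * 4 ^ (p / (1 + p)) := by rw [mul_comm s]; gcongr

lemma exists_threshold_le {N p cX α s : ℝ} (hN : 0 < N) (hp : 1 ≤ p) (hc : 0 < cX)
    (hs : 1 + 1 / p ≤ s) :
    ∃ T > 0, 2 * T * N ^ α + s * (N * cX / T ^ p) ≤
      s * (4 * cX ^ (1 / p) + 1) ^ (p / (1 + p)) * N ^ ((1 + p * α) / (1 + p)) := by
  have hp0 : 0 < p := by linarith
  have hp1 : 0 < 1 + p := by linarith
  have hs0 : 0 < s := by have := one_div_pos.2 hp0; linarith
  set r := 1 / (1 + p)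
  set T := (s / 2 * cX * N ^ (1 - α)) ^ r with hT
  have hT0 : 0 < T := by positivity
  have hTpow : T ^ p * T = s / 2 * cX * N ^ (1 - α) := by
    rw [← rpow_add_one hT0.ne', hT, ← rpow_mul (by positivity), add_comm p,
      one_div_mul_cancel hp1.ne', rpow_one]
  have hTN : T * N ^ α = (s / 2) ^ r * cX ^ r * N ^ ((1 + p * α) / (1 + p)) := by
    rw [hT, mul_rpow (by positivity) (by positivity), mul_rpow (by positivity) hc.le,
      ← rpow_mul hN.le, mul_assoc, ← rpow_add hN]
    congr 2
    simp only [r]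
    field_simp
    ring
  have htail : s * (N * cX / T ^ p) = 2 * T * N ^ α := by
    rw [mul_div_assoc', div_eq_iff (by positivity)]
    have : N = N ^ (1 - α) * N ^ α := by rw [← rpow_add hN]; simp
    calc s * (N * cX) = 2 * (s / 2 * cX * N ^ (1 - α)) * N ^ α := by
          nth_rw 1 [this]; ring
      _ = 2 * T * N ^ α * T ^ p := by rw [← hTpow]; ring
  have hcX : cX ^ r = (cX ^ (1 / p)) ^ (p / (1 + p)) := by
    rw [← rpow_mul hc.le]
    congr 1
    simp only [r]
    field_simp
  refine ⟨T, hT0, ?_⟩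
  calc 2 * T * N ^ α + s * (N * cX / T ^ p)
      = 4 * (s / 2) ^ r * (cX ^ (1 / p)) ^ (p / (1 + p)) * N ^ ((1 + p * α) / (1 + p)) := by
        rw [htail, ← hcX]
        linear_combination 4 * hTN
    _ ≤ s * 4 ^ (p / (1 + p)) * (cX ^ (1 / p)) ^ (p / (1 + p)) *
          N ^ ((1 + p * α) / (1 + p)) := by
        gcongr ?_ * _ * _
        exact four_mul_rpow_le hp hs
    _ = s * (4 * cX ^ (1 / p)) ^ (p / (1 + p)) * N ^ ((1 + p * α) / (1 + p)) := by
        rw [mul_rpow (by norm_num) (by positivity), mul_assoc s]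
    _ ≤ s * (4 * cX ^ (1 / p) + 1) ^ (p / (1 + p)) * N ^ ((1 + p * α) / (1 + p)) := by
        gcongr
        linarith

lemma two_mul_mul_add_one_le_rpow {x N γ s : ℝ} (hN : 0 < N) (hγ : 0 ≤ γ) (hs : 1 ≤ s)
    (hx : x ≤ γ * N ^ (s - 1)) : 2 * x * N + 1 ≤ ((N + 1) * (2 * γ + 1) ^ (1 / s)) ^ s := by
  have hs0 : 0 < s := by linarith
  have hone : 1 ≤ (N + 1) ^ s := one_le_rpow (by linarith) hs0.le
  have hNs : N ^ s ≤ (N + 1) ^ s := rpow_le_rpow hN.le (by linarith) hs0.le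
  rw [mul_rpow (by positivity) (by positivity), ← rpow_mul (by positivity),
    one_div_mul_cancel hs0.ne', rpow_one]
  calc 2 * x * N + 1 ≤ 2 * (γ * N ^ (s - 1)) * N + 1 := by gcongr
    _ = 2 * γ * N ^ s + 1 := by rw [rpow_sub_one hN.ne']; field_simp
    _ ≤ (N + 1) ^ s * (2 * γ + 1) := by nlinarith

lemma pow_mul_pow_le_rpow {x y b s E : ℝ} {a k : ℕ} (hx : 1 ≤ x) (hxb : x ≤ b) (hy : 0 ≤ y)
    (hyb : y ≤ b ^ s) (hE : a + s * k ≤ E) : x ^ a * y ^ k ≤ b ^ E := by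
  have hb : 1 ≤ b := hx.trans hxb
  have hb0 : 0 < b := by linarith
  calc x ^ a * y ^ k ≤ b ^ a * (b ^ s) ^ k := by gcongr
    _ = b ^ ((a : ℝ) + s * k) := by
        rw [rpow_add hb0, rpow_natCast, ← rpow_natCast (b ^ s), ← rpow_mul hb0.le]
    _ ≤ b ^ E := rpow_le_rpow_of_exponent_le hb hE

end RealBounds

/-- Lemma 5 (Number of types):
`|P_n(X_n, c_X)| ≤ ((n+1)c)^{c̃ n^{(1+pα)/(1+p)}}` with
`c = (2 c_X^{1/p} + 1)^{1/(1 + 1/p + α)}` and `c̃ = (1 + 1/p + α)(4 c_X^{1/p} + 1)^{p/(1+p)}`. -/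
theorem number_of_types
    (n : ℕ) (hn : 0 < n) (p cX α : ℝ) (hp : 1 ≤ p) (hc : 0 < cX)
    (hα : α ∈ Set.Ioo (0 : ℝ) 1) :
    (constrainedTypes n ((n : ℝ) ^ (-α)) p cX).Finite ∧
    ((constrainedTypes n ((n : ℝ) ^ (-α)) p cX).ncard : ℝ) ≤
      (((n : ℝ) + 1) * (2 * cX ^ (1 / p) + 1) ^ (1 / (1 + 1 / p + α))) ^
        ((1 + 1 / p + α) * (4 * cX ^ (1 / p) + 1) ^ (p / (1 + p)) *
          (n : ℝ) ^ ((1 + p * α) / (1 + p))) := by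
  have hp0 : 0 < p := by linarith
  have hn0 : (0 : ℝ) < n := by exact_mod_cast hn
  have hs : 1 + 1 / p ≤ 1 + 1 / p + α := by linarith [hα.1]
  have hs1 : 1 ≤ 1 + 1 / p + α := by linarith [one_div_pos.2 hp0]
  have hc1 : 1 ≤ (2 * cX ^ (1 / p) + 1) ^ (1 / (1 + 1 / p + α)) :=
    Real.one_le_rpow (by linarith [Real.rpow_nonneg hc.le (1 / p)]) (by positivity)
  have hdivΔ (x : ℝ) : x / n ^ (-α) = x * n ^ α := by
    rw [Real.rpow_neg hn0.le, div_inv_eq_mul]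
  obtain ⟨T, hT, hexp⟩ := exists_threshold_le (α := α) hn0 hp hc hs
  obtain ⟨hfin, hcard⟩ := constrainedTypes_finite_and_ncard_le (Δ := n ^ (-α)) (cX := cX) hn
    (by positivity) hp0 hT
  refine ⟨hfin, (Nat.cast_le.2 hcard).trans ?_⟩
  push_cast
  refine pow_mul_pow_le_rpow (by linarith) (le_mul_of_one_le_right (by positivity) hc1)
    (by positivity) (two_mul_mul_add_one_le_rpow hn0 (by positivity) hs1 ?_) ?_
  · refine (Nat.floor_le (by positivity)).trans_eq ?_
    rw [hdivΔ, Real.mul_rpow hn0.le hc.le, show 1 + 1 / p + α - 1 = p⁻¹ + α by ring,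
      Real.rpow_add hn0, one_div]
    ring
  · have hL : (⌊T / n ^ (-α)⌋₊ : ℝ) ≤ T * n ^ α :=
      (Nat.floor_le (by positivity)).trans_eq (hdivΔ T)
    have hK : (⌊n * cX / T ^ p⌋₊ : ℝ) ≤ n * cX / T ^ p := Nat.floor_le (by positivity)
    push_cast
    linarith [mul_le_mul_of_nonneg_left hK (by linarith : (0 : ℝ) ≤ 1 + 1 / p + α)]
end
end

section
/- Let w be the AWGGN channel density with parameters ν > 0, q ≥ 1, let x, y ∈ ℝ^n, and let x* = Q_α(x) ∈ X_n^n and y* = Q_β(y) ∈ Y_n^n be their componentwise quantized versions. Suppose (x*, y*) ∈ T(P_XY) for a joint type P_XY with E_{P_XY}[|Y − X|^q] ≤ c_XY. Then | −(1/n) log_b ∏_k w(y_k|x_k) + (1/n) log_b ∏_k w(y*_k|x*_k) | ≤ (qν/(2 ln b)) (Δ_{α,n} + Δ_{β,n}) [ c_XY^{1/q} + (Δ_{α,n} + Δ_{β,n})/2 ]^{q−1}. -/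
open Set

noncomputable section

/-- The AWGGN channel transition density
`w(y|x) = (q ν^{1/q}/(2Γ(1/q))) exp(-ν|y-x|^q)`. -/
def ggDensity (ν q x y : ℝ) : ℝ :=
  (q * ν ^ (1 / q) / (2 * Real.Gamma (1 / q))) * Real.exp (-(ν * |y - x| ^ q))

/-- The uniform quantizer with step `Δ`: `Q(t) = Δ ⌊t/Δ + 1/2⌋`. -/
def quant (Δ t : ℝ) : ℝ := Δ * (⌊t / Δ + 1 / 2⌋ : ℤ)

/-- A joint type with denominator `n` on the product of lattice alphabets. -/
def IsJointType (n : ℕ) (Δx Δy : ℝ) (P : ℝ × ℝ → ℝ) : Prop :=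
  (∀ z, 0 ≤ P z) ∧
    (∀ z, P z ≠ 0 → (∃ i : ℤ, z.1 = (i : ℝ) * Δx) ∧ ∃ j : ℤ, z.2 = (j : ℝ) * Δy) ∧
    (∀ z, ∃ k : ℕ, P z = (k : ℝ) / n) ∧ (Function.support P).Finite ∧ ∑ᶠ z, P z = 1

/-- Empirical distribution of a sequence `z` of length `n`. -/
def empDist {γ : Type*} (n : ℕ) (z : Fin n → γ) (a : γ) : ℝ :=
  (({k : Fin n | z k = a}).ncard : ℝ) / n

/-- Quantization error bound. -/
lemma aux_quant (Δ t : ℝ) (hΔ : 0 < Δ) : |t - quant Δ t| ≤ Δ / 2 := by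
  have h1 : (⌊t / Δ + 1 / 2⌋ : ℝ) ≤ t / Δ + 1 / 2 := Int.floor_le _
  have h2 : t / Δ + 1 / 2 - 1 < (⌊t / Δ + 1 / 2⌋ : ℝ) := Int.sub_one_lt_floor _
  have ht : t = Δ * (t / Δ) := by field_simp
  rw [quant, abs_le]
  constructor
  · nlinarith
  · nlinarith

lemma aux_rpow_sub {q a b : ℝ} (hq : 1 ≤ q) (hb : 0 ≤ b) (hba : b ≤ a) :
    a ^ q - b ^ q ≤ q * a ^ (q - 1) * (a - b) := by
  have ha : 0 ≤ a := hb.trans hba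
  rcases eq_or_lt_of_le ha with h | h
  · have hb0 : b = 0 := le_antisymm (hba.trans h.symm.le) hb
    simp [← h, hb0, Real.zero_rpow (by positivity : q ≠ 0)]
  · have hs : (-1 : ℝ) ≤ b / a - 1 := by
      have : 0 ≤ b / a := by positivity
      linarith
    have hbern := one_add_mul_self_le_rpow_one_add hs hq
    have h1 : (1 : ℝ) + (b / a - 1) = b / a := by ring
    rw [h1] at hbern
    have h2 : (b / a) ^ q = b ^ q / a ^ q := Real.div_rpow hb ha q
    rw [h2] at hbern
    have haq : (0 : ℝ) < a ^ q := Real.rpow_pos_of_pos h q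
    have key : (1 + q * (b / a - 1)) * a ^ q ≤ b ^ q := by
      calc (1 + q * (b / a - 1)) * a ^ q ≤ b ^ q / a ^ q * a ^ q :=
            mul_le_mul_of_nonneg_right hbern haq.le
        _ = b ^ q := by field_simp
    have hq1 : a ^ (q - 1) * a = a ^ q := by
      rw [← Real.rpow_add_one h.ne' (q - 1)]; ring_nf
    have hdiv : a ^ q * (b / a) = a ^ (q - 1) * b := by
      rw [← hq1]; field_simp
    nlinarith [Real.rpow_pos_of_pos h (q - 1)]

lemma aux_rpow_abs {q a b : ℝ} (hq : 1 ≤ q) (ha : 0 ≤ a) (hb : 0 ≤ b) :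
    |a ^ q - b ^ q| ≤ q * (max a b) ^ (q - 1) * |a - b| := by
  rcases le_total b a with h | h
  · rw [max_eq_left h, abs_of_nonneg (sub_nonneg.2 h),
      abs_of_nonneg (sub_nonneg.2 (Real.rpow_le_rpow hb h (by linarith)))]
    exact aux_rpow_sub hq hb h
  · rw [max_eq_right h, abs_sub_comm, abs_sub_comm a b,
      abs_of_nonneg (sub_nonneg.2 h),
      abs_of_nonneg (sub_nonneg.2 (Real.rpow_le_rpow ha h (by linarith)))]
    exact aux_rpow_sub hq ha h

lemma aux_mean {n : ℕ} (hn : 0 < n) {q d c : ℝ} (hq : 1 ≤ q) (hd : 0 ≤ d)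
    (v : Fin n → ℝ) (hv : ∀ k, 0 ≤ v k)
    (hvc : (1 / (n : ℝ)) * ∑ k, v k ^ q ≤ c) :
    (1 / (n : ℝ)) * ∑ k, (v k + d) ^ (q - 1) ≤ (c ^ (1 / q) + d) ^ (q - 1) := by
  have hn' : (0 : ℝ) < n := Nat.cast_pos.2 hn
  have hc : 0 ≤ c := le_trans (mul_nonneg (by positivity)
    (Finset.sum_nonneg fun k _ => Real.rpow_nonneg (hv k) q)) hvc
  rcases eq_or_lt_of_le hq with h1 | h1
  · rw [← h1]
    simp only [sub_self, Real.rpow_zero]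
    rw [Finset.sum_const, Finset.card_univ, Fintype.card_fin, nsmul_eq_mul, mul_one,
      one_div, inv_mul_cancel₀ hn'.ne']
  have hq0 : (0 : ℝ) < q := by linarith
  have hq10 : (0 : ℝ) < q - 1 := by linarith
  set p : ℝ := q / (q - 1) with hp
  have hp1 : 1 ≤ p := by rw [hp, le_div_iff₀ hq10]; linarith
  have hqp : (q - 1) * p = q := by rw [hp]; field_simp
  have hw : ∑ _k : Fin n, (1 / (n : ℝ)) = 1 := by
    rw [Finset.sum_const, Finset.card_univ, Fintype.card_fin, nsmul_eq_mul]
    field_simp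
  have step1 := Real.arith_mean_le_rpow_mean Finset.univ (fun _ => 1 / (n : ℝ))
    (fun k => (v k + d) ^ (q - 1)) (fun i _ => by positivity) hw
    (fun i _ => Real.rpow_nonneg (by have := hv i; positivity) _) hp1
  have hzp : ∀ k : Fin n, ((v k + d) ^ (q - 1)) ^ p = (v k + d) ^ q := fun k => by
    rw [← Real.rpow_mul (by have := hv k; positivity), hqp]
  simp only [hzp] at step1
  rw [← Finset.mul_sum] at step1
  set S : ℝ := (1 / (n : ℝ)) * ∑ k, (v k + d) ^ q with hS
  have hS0 : 0 ≤ S := by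
    apply mul_nonneg (by positivity)
    exact Finset.sum_nonneg fun k _ => Real.rpow_nonneg (by have := hv k; positivity) q
  have mink := Real.Lp_add_le Finset.univ
    (fun k : Fin n => (1 / (n : ℝ)) ^ (1 / q) * v k)
    (fun _ : Fin n => (1 / (n : ℝ)) ^ (1 / q) * d) hq
  have hpow : ∀ t : ℝ, 0 ≤ t → |(1 / (n : ℝ)) ^ (1 / q) * t| ^ q = (1 / (n : ℝ)) * t ^ q := by
    intro t ht
    rw [abs_of_nonneg (by positivity), Real.mul_rpow (by positivity) ht,
      ← Real.rpow_mul (by positivity), one_div_mul_cancel hq0.ne', Real.rpow_one]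
  have e1 : ∀ k : Fin n,
      |(1 / (n : ℝ)) ^ (1 / q) * v k + (1 / (n : ℝ)) ^ (1 / q) * d| ^ q
        = (1 / (n : ℝ)) * (v k + d) ^ q := fun k => by
    rw [← mul_add]; exact hpow _ (by have := hv k; positivity)
  have e2 : ∀ k : Fin n, |(1 / (n : ℝ)) ^ (1 / q) * v k| ^ q = (1 / (n : ℝ)) * v k ^ q :=
    fun k => hpow (v k) (hv k)
  have e3 := hpow d hd
  simp only [e1, e2, e3] at mink
  rw [Finset.sum_const, Finset.card_univ, Fintype.card_fin, nsmul_eq_mul] at mink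
  have hnd : (n : ℝ) * ((1 / (n : ℝ)) * d ^ q) = d ^ q := by field_simp
  rw [hnd] at mink
  have hdq : (d ^ q) ^ (1 / q) = d := by
    rw [← Real.rpow_mul hd, mul_one_div_cancel hq0.ne', Real.rpow_one]
  rw [hdq] at mink
  have hsum1 : ∑ k : Fin n, (1 / (n : ℝ)) * (v k + d) ^ q = S := by
    rw [hS, Finset.mul_sum]
  have hsum2 : ∑ k : Fin n, (1 / (n : ℝ)) * v k ^ q = (1 / (n : ℝ)) * ∑ k, v k ^ q := by
    rw [Finset.mul_sum]
  rw [hsum1, hsum2] at mink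
  have hM0 : 0 ≤ (1 / (n : ℝ)) * ∑ k, v k ^ q := by
    apply mul_nonneg (by positivity)
    exact Finset.sum_nonneg fun k _ => Real.rpow_nonneg (hv k) q
  have mink2 : S ^ (1 / q) ≤ c ^ (1 / q) + d :=
    le_trans mink (add_le_add_left (Real.rpow_le_rpow hM0 hvc (by positivity)) d)
  have h1p : (1 : ℝ) / p = (q - 1) / q := by rw [hp]; field_simp
  have hSp : S ^ (1 / p) = (S ^ (1 / q)) ^ (q - 1) := by
    rw [← Real.rpow_mul hS0, h1p]
    congr 1
    field_simp
  calc (1 / (n : ℝ)) * ∑ k, (v k + d) ^ (q - 1)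
      ≤ (∑ x : Fin n, 1 / (n : ℝ) * (v x + d) ^ q) ^ (1 / p) := step1
    _ = S ^ (1 / p) := by rw [hS, Finset.mul_sum]
    _ = (S ^ (1 / q)) ^ (q - 1) := hSp
    _ ≤ (c ^ (1 / q) + d) ^ (q - 1) :=
        Real.rpow_le_rpow (Real.rpow_nonneg hS0 _) mink2 hq10.le

lemma aux_emp {n : ℕ} (hn : 0 < n) (w : Fin n → ℝ × ℝ) (g : ℝ × ℝ → ℝ)
    (P : ℝ × ℝ → ℝ) (hT : ∀ a, empDist n w a = P a) :
    ∑ᶠ a, P a * g a = (1 / (n : ℝ)) * ∑ k, g (w k) := by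
  classical
  have hn' : (0 : ℝ) < n := Nat.cast_pos.2 hn
  set s : Finset (ℝ × ℝ) := Finset.image w Finset.univ with hs
  have hsub : Function.support (fun a => P a * g a) ⊆ (s : Set (ℝ × ℝ)) := by
    intro a ha
    have hPa : P a ≠ 0 := fun h => ha (by simp [Function.mem_support] at ha ⊢; simp [h])
    rw [← hT a] at hPa
    have : ({k : Fin n | w k = a}).ncard ≠ 0 := by
      intro h; apply hPa; simp [empDist, h]
    have hne : ({k : Fin n | w k = a}).Nonempty := by
      rw [Set.nonempty_iff_ne_empty]
      intro h; apply this; rw [h]; simp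
    obtain ⟨k, hk⟩ := hne
    exact Finset.mem_coe.2 (Finset.mem_image.2 ⟨k, Finset.mem_univ k, hk⟩)
  rw [finsum_eq_sum_of_support_subset _ hsub]
  have hcomp : ∑ k, g (w k) = ∑ b ∈ s, (Finset.univ.filter fun a => w a = b).card • g b := Finset.sum_comp g w
  have hcard : ∀ a : ℝ × ℝ, (({k : Fin n | w k = a}).ncard : ℝ) = ((Finset.univ.filter fun k => w k = a).card : ℝ) := by
    intro a
    rw [Set.ncard_eq_toFinset_card']
    congr 1
    simp [Set.toFinset_setOf]
  rw [hcomp, Finset.mul_sum]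
  refine Finset.sum_congr rfl fun a _ => ?_
  rw [← hT a, empDist, hcard a, nsmul_eq_mul]
  ring

lemma aux_log {n : ℕ} (hn : 0 < n) {ν q b : ℝ} (hν : 0 < ν) (hq : 1 ≤ q) (hb : 1 < b)
    (f g : Fin n → ℝ) :
    (1 / (n : ℝ)) * Real.logb b (∏ k, ggDensity ν q (f k) (g k)) =
      Real.logb b (q * ν ^ (1 / q) / (2 * Real.Gamma (1 / q)))
        - ν / ((n : ℝ) * Real.log b) * ∑ k, |g k - f k| ^ q := by
  have hn' : (0 : ℝ) < n := Nat.cast_pos.2 hn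
  have hq0 : (0 : ℝ) < q := lt_of_lt_of_le one_pos hq
  have hC : 0 < q * ν ^ (1 / q) / (2 * Real.Gamma (1 / q)) :=
    div_pos (mul_pos hq0 (Real.rpow_pos_of_pos hν _))
      (mul_pos two_pos (Real.Gamma_pos_of_pos (by positivity)))
  have hL : 0 < Real.log b := Real.log_pos hb
  have hlog : ∀ k : Fin n, Real.log (ggDensity ν q (f k) (g k)) =
      Real.log (q * ν ^ (1 / q) / (2 * Real.Gamma (1 / q))) - ν * |g k - f k| ^ q := by
    intro k
    rw [ggDensity, Real.log_mul hC.ne' (Real.exp_pos _).ne', Real.log_exp]; ring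
  rw [Real.logb, Real.logb,
    Real.log_prod (s := Finset.univ) (f := fun k => ggDensity ν q (f k) (g k))
      (fun k _ => by unfold ggDensity; exact (mul_pos hC (Real.exp_pos _)).ne')]
  simp only [hlog]
  rw [Finset.sum_sub_distrib, Finset.sum_const, Finset.card_univ, Fintype.card_fin,
    nsmul_eq_mul, ← Finset.mul_sum]
  field_simp

/-- Lemma 6 (PDF exponent): the per-letter exponents of the channel density at `(x, y)`
and at their quantized versions differ by a vanishing amount. -/
theorem pdf_exponent
    (ν q b α β c_XY : ℝ) (hν : 0 < ν) (hq : 1 ≤ q) (hb : 1 < b)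
    (hα : α ∈ Set.Ioo (0 : ℝ) 1) (hβ : β ∈ Set.Ioo (0 : ℝ) 1)
    (n : ℕ) (hn : 0 < n) (x y : Fin n → ℝ) (P : ℝ × ℝ → ℝ)
    (hP : IsJointType n ((n : ℝ) ^ (-α)) ((n : ℝ) ^ (-β)) P)
    (hT : ∀ a : ℝ × ℝ,
      empDist n (fun k => (quant ((n : ℝ) ^ (-α)) (x k), quant ((n : ℝ) ^ (-β)) (y k))) a = P a)
    (hc : (∑ᶠ z : ℝ × ℝ, P z * |z.2 - z.1| ^ q) ≤ c_XY) :
    |(-(1 / (n : ℝ)) * Real.logb b (∏ k, ggDensity ν q (x k) (y k)) +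
        (1 / (n : ℝ)) *
          Real.logb b
            (∏ k, ggDensity ν q (quant ((n : ℝ) ^ (-α)) (x k)) (quant ((n : ℝ) ^ (-β)) (y k))))| ≤
      q * ν / (2 * Real.log b) * ((n : ℝ) ^ (-α) + (n : ℝ) ^ (-β)) *
        (c_XY ^ (1 / q) + ((n : ℝ) ^ (-α) + (n : ℝ) ^ (-β)) / 2) ^ (q - 1) := by
  classical
  have hn' : (0 : ℝ) < n := Nat.cast_pos.2 hn
  have hL : 0 < Real.log b := Real.log_pos hb
  have hq0 : (0 : ℝ) < q := lt_of_lt_of_le one_pos hq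
  set Δa : ℝ := (n : ℝ) ^ (-α) with hΔa
  set Δb : ℝ := (n : ℝ) ^ (-β) with hΔb
  have hΔa0 : 0 < Δa := Real.rpow_pos_of_pos hn' _
  have hΔb0 : 0 < Δb := Real.rpow_pos_of_pos hn' _
  set D : ℝ := Δa + Δb with hD
  have hD0 : 0 < D := by positivity
  have h1 := aux_log hn hν hq hb x y
  have h2 := aux_log hn hν hq hb (fun k => quant Δa (x k)) (fun k => quant Δb (y k))
  have key : -(1 / (n : ℝ)) * Real.logb b (∏ k, ggDensity ν q (x k) (y k)) +
      (1 / (n : ℝ)) * Real.logb b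
        (∏ k, ggDensity ν q (quant Δa (x k)) (quant Δb (y k))) =
      ν / ((n : ℝ) * Real.log b) *
        (∑ k, |y k - x k| ^ q - ∑ k, |quant Δb (y k) - quant Δa (x k)| ^ q) := by
    rw [neg_mul, h1, h2]; ring
  rw [key, abs_mul, abs_of_nonneg (by positivity : (0:ℝ) ≤ ν / ((n : ℝ) * Real.log b))]
  -- pointwise bound
  have hsum : |∑ k, |y k - x k| ^ q - ∑ k, |quant Δb (y k) - quant Δa (x k)| ^ q| ≤
      ∑ k, q * (|quant Δb (y k) - quant Δa (x k)| + D / 2) ^ (q - 1) * (D / 2) := by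
    rw [← Finset.sum_sub_distrib]
    refine le_trans (Finset.abs_sum_le_sum_abs _ _) (Finset.sum_le_sum fun k _ => ?_)
    set u : ℝ := |y k - x k| with hu
    set v : ℝ := |quant Δb (y k) - quant Δa (x k)| with hv
    have huv : |u - v| ≤ D / 2 := by
      have e1 : |y k - quant Δb (y k)| ≤ Δb / 2 := aux_quant Δb (y k) hΔb0
      have e2 : |x k - quant Δa (x k)| ≤ Δa / 2 := aux_quant Δa (x k) hΔa0
      calc |u - v| ≤ |(y k - x k) - (quant Δb (y k) - quant Δa (x k))| :=
            abs_abs_sub_abs_le_abs_sub _ _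
        _ = |(y k - quant Δb (y k)) - (x k - quant Δa (x k))| := by ring_nf
        _ ≤ |y k - quant Δb (y k)| + |x k - quant Δa (x k)| := abs_sub _ _
        _ ≤ Δb / 2 + Δa / 2 := add_le_add e1 e2
        _ = D / 2 := by rw [hD]; ring
    have hv0 : (0 : ℝ) ≤ v := abs_nonneg _
    have hu0 : (0 : ℝ) ≤ u := abs_nonneg _
    refine le_trans (aux_rpow_abs hq hu0 hv0) ?_
    have hmax : max u v ≤ v + D / 2 := by
      refine max_le ?_ (by linarith)
      have := le_abs_self (u - v)
      linarith
    have h5 : (max u v) ^ (q - 1) ≤ (v + D / 2) ^ (q - 1) :=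
      Real.rpow_le_rpow (le_trans hv0 (le_max_right _ _)) hmax (by linarith)
    exact mul_le_mul (mul_le_mul_of_nonneg_left h5 hq0.le) huv (abs_nonneg _)
      (by positivity)
  -- empirical distribution
  have hvc : (1 / (n : ℝ)) * ∑ k, |quant Δb (y k) - quant Δa (x k)| ^ q ≤ c_XY := by
    have he := aux_emp hn (fun k => (quant Δa (x k), quant Δb (y k)))
      (fun z => |z.2 - z.1| ^ q) P hT
    simp only at he
    rw [← he]
    exact hc
  have hmean := aux_mean hn hq (by positivity : (0 : ℝ) ≤ D / 2)
    (fun k => |quant Δb (y k) - quant Δa (x k)|) (fun k => abs_nonneg _) hvc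
  have hre : ∑ k, q * (|quant Δb (y k) - quant Δa (x k)| + D / 2) ^ (q - 1) * (D / 2)
      = q * (D / 2) * ∑ k, (|quant Δb (y k) - quant Δa (x k)| + D / 2) ^ (q - 1) := by
    rw [Finset.mul_sum]
    exact Finset.sum_congr rfl fun k _ => by ring
  calc ν / ((n : ℝ) * Real.log b) *
        |∑ k, |y k - x k| ^ q - ∑ k, |quant Δb (y k) - quant Δa (x k)| ^ q|
      ≤ ν / ((n : ℝ) * Real.log b) *
        ∑ k, q * (|quant Δb (y k) - quant Δa (x k)| + D / 2) ^ (q - 1) * (D / 2) :=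
        mul_le_mul_of_nonneg_left hsum (by positivity)
    _ = q * ν / (2 * Real.log b) * D *
        ((1 / (n : ℝ)) * ∑ k, (|quant Δb (y k) - quant Δa (x k)| + D / 2) ^ (q - 1)) := by
        rw [hre]; field_simp
    _ ≤ q * ν / (2 * Real.log b) * D * ((c_XY ^ (1 / q) + D / 2) ^ (q - 1)) :=
        mul_le_mul_of_nonneg_left hmean (by positivity)
end
end

section
/- Let f(x) = x ln x. Then for all real t with 0 < t ≤ 1/e and all t₁ > 0: t ln t ≤ f(t₁ + t) − f(t₁) ≤ t · ln max{1/t, (t₁ + t)e}. -/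
noncomputable section

/-- Lemma 14: for `f(x) = x ln x`, `0 < t ≤ 1/e`, and `t₁ > 0`,
`t ln t ≤ f(t₁ + t) − f(t₁) ≤ t ln max{1/t, (t₁ + t)e}`. -/
theorem xlogx_difference_bounds
    (t t₁ : ℝ) (ht : 0 < t) (ht' : t ≤ 1 / Real.exp 1) (ht₁ : 0 < t₁) :
    t * Real.log t ≤ (t₁ + t) * Real.log (t₁ + t) - t₁ * Real.log t₁ ∧
    (t₁ + t) * Real.log (t₁ + t) - t₁ * Real.log t₁ ≤
      t * Real.log (max (1 / t) ((t₁ + t) * Real.exp 1)) := by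
  have hb : 0 < t₁ + t := by linarith
  have hlog1 : Real.log t ≤ Real.log (t₁ + t) := Real.log_le_log ht (by linarith)
  have hlog2 : Real.log t₁ ≤ Real.log (t₁ + t) := Real.log_le_log ht₁ (by linarith)
  constructor
  · nlinarith [mul_le_mul_of_nonneg_left hlog1 ht.le,
      mul_le_mul_of_nonneg_left hlog2 ht₁.le]
  · have hx : (0:ℝ) < (t₁ + t) / t₁ := div_pos hb ht₁
    have h1 : Real.log ((t₁ + t) / t₁) ≤ (t₁ + t) / t₁ - 1 :=
      Real.log_le_sub_one_of_pos hx
    have h2 : Real.log ((t₁ + t) / t₁) = Real.log (t₁ + t) - Real.log t₁ :=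
      Real.log_div hb.ne' ht₁.ne'
    have h3 : t₁ * (Real.log (t₁ + t) - Real.log t₁) ≤ t := by
      have h4 := mul_le_mul_of_nonneg_left h1 ht₁.le
      rw [h2] at h4
      calc t₁ * (Real.log (t₁ + t) - Real.log t₁) ≤ t₁ * ((t₁ + t) / t₁ - 1) := h4
        _ = t := by field_simp; ring
    have hmain : (t₁ + t) * Real.log (t₁ + t) - t₁ * Real.log t₁ ≤
        t * Real.log ((t₁ + t) * Real.exp 1) := by
      rw [Real.log_mul hb.ne' (Real.exp_pos 1).ne', Real.log_exp]
      nlinarith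
    refine hmain.trans ?_
    apply mul_le_mul_of_nonneg_left _ ht.le
    exact Real.log_le_log (by positivity) (le_max_right _ _)
end
end
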